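/- arXiv:1202.5739 — 5 statements merged into one kernel-verified Lean document; each statement's English description precedes it below -/
import Mathlib

section
/- Let w ∈ F^10 be a nonzero vector. Then w lies in the span of {q1(u,v), q2(u,v), r(u,v)} for some (u,v) ∈ F² with (u,v) ≠ (0,0) if and only if w ∈ X ∪ Y. In other words, the union over all (u,v) ≠ (0,0) of the sets of nonzero vectors of the planes γ(u,v) = span{q1(u,v), q2(u,v), r(u,v)} equals X ∪ Y. -/
/-- Coordinates of `F^10` are indexed (in this order) by
`p135, p136, p145, p146, p235, p236, p245, p246, p356, p456`. -/
def q1 {F : Type*} [Field F] (u v : F) : Fin 10 → F :=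
  ![u ^ 2, u * v, u * v, v ^ 2, 0, 0, 0, 0, 0, 0]

def q2 {F : Type*} [Field F] (u v : F) : Fin 10 → F :=
  ![0, 0, 0, 0, u ^ 2, u * v, u * v, v ^ 2, 0, 0]

def r {F : Type*} [Field F] (u v : F) : Fin 10 → F :=
  ![0, 0, 0, 0, 0, 0, 0, 0, u, v]

/-- The parametrization of the Grassmann image of the `X`-submodules. -/
def Phi {F : Type*} [Field F] (a11 b11 a22 b22 a12 b12 : F) : Fin 10 → F :=
  ![-(a11 * a22 ^ 2), -(a11 * a22 * b22), -(a11 * a22 * b22), -(a11 * b22 ^ 2),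
    -(b11 * a22 ^ 2), -(b11 * a22 * b22), -(b11 * a22 * b22), -(b11 * b22 ^ 2),
    a22 * (a12 * b22 - b12 * a22), b22 * (a12 * b22 - b12 * a22)]

/-- The Grassmann image `X` of the set of `X`-submodules. -/
def Xset (F : Type*) [Field F] : Set (Fin 10 → F) :=
  {p | ∃ a11 b11 a22 b22 a12 b12 : F,
    (a11, b11) ≠ (0, 0) ∧ (a22, b22) ≠ (0, 0) ∧ p = Phi a11 b11 a22 b22 a12 b12}

/-- The Grassmann image `Y` of the set of `Y`-submodules: all coordinates vanish
except `(p356, p456) ≠ (0,0)`. -/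
def Yset (F : Type*) [Field F] : Set (Fin 10 → F) :=
  {p | p 0 = 0 ∧ p 1 = 0 ∧ p 2 = 0 ∧ p 3 = 0 ∧ p 4 = 0 ∧ p 5 = 0 ∧ p 6 = 0 ∧
    p 7 = 0 ∧ (p 8, p 9) ≠ (0, 0)}

/-!
A vector of the plane `γ(u,v)` is `a q1 + b q2 + c r`. The formula for `Phi` is exactly this
combination with `(a22, b22) = (u, v)`, `(a11, b11) = -(a, b)` and `c = a12 v - b12 u`; the
last equation is solvable in `(a12, b12)` because `(u, v) ≠ (0, 0)`. When `a = b = 0` the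
vector is `c r(u, v) = r(cu, cv)`, which is a point of `Y` as soon as it is nonzero.
-/

section

variable {F : Type*} [Field F]

theorem Phi_eq_add_smul (a11 b11 a22 b22 a12 b12 : F) :
    Phi a11 b11 a22 b22 a12 b12 =
      (-a11) • q1 a22 b22 + (-b11) • q2 a22 b22 + (a12 * b22 - b12 * a22) • r a22 b22 := by
  ext i
  fin_cases i <;> simp [Phi, q1, q2, r] <;> ring

theorem smul_r (c u v : F) : c • r u v = r (c * u) (c * v) := by
  ext i
  fin_cases i <;> simp [r]

theorem r_eq_of_mem_Yset (w : Fin 10 → F) (hw : w ∈ Yset F) : r (w 8) (w 9) = w := by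
  obtain ⟨h0, h1, h2, h3, h4, h5, h6, h7, -⟩ := hw
  ext i
  fin_cases i <;> simp [r, *]

theorem r_mem_Yset_iff (u v : F) : r u v ∈ Yset F ↔ r u v ≠ 0 := by
  simp [Yset, r, funext_iff, Fin.forall_fin_succ]

theorem exists_mul_sub_mul_eq {u v : F} (huv : (u, v) ≠ (0, 0)) (c : F) :
    ∃ x y : F, x * v - y * u = c := by
  by_cases hv : v = 0
  · have hu : u ≠ 0 := by rintro rfl; exact huv (by rw [hv])
    exact ⟨0, -(c / u), by field_simp; ring⟩
  · exact ⟨c / v, 0, by field_simp; ring⟩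

theorem add_smul_mem_Xset {a b u v : F} (hab : (a, b) ≠ (0, 0)) (huv : (u, v) ≠ (0, 0))
    (c : F) : a • q1 u v + b • q2 u v + c • r u v ∈ Xset F := by
  obtain ⟨x, y, hxy⟩ := exists_mul_sub_mul_eq huv c
  refine ⟨-a, -b, u, v, x, y, by simpa using hab, huv, ?_⟩
  rw [Phi_eq_add_smul, neg_neg, neg_neg, hxy]

end

/-- A nonzero vector `w` lies in some plane `γ(u,v) = span{q1(u,v), q2(u,v), r(u,v)}`
with `(u,v) ≠ (0,0)` if and only if `w ∈ X ∪ Y`. -/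
theorem statement1 {F : Type*} [Field F] (w : Fin 10 → F) (hw : w ≠ 0) :
    (∃ u v : F, (u, v) ≠ (0, 0) ∧
      w ∈ Submodule.span F ({q1 u v, q2 u v, r u v} : Set (Fin 10 → F))) ↔
    w ∈ Xset F ∪ Yset F := by
  simp_rw [Submodule.mem_span_triple]
  constructor
  · rintro ⟨u, v, huv, a, b, c, rfl⟩
    by_cases hab : (a, b) = (0, 0)
    · obtain ⟨rfl, rfl⟩ := Prod.mk.inj hab
      simp only [zero_smul, zero_add, smul_r] at hw ⊢
      exact Or.inr ((r_mem_Yset_iff _ _).2 hw)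
    · exact Or.inl (add_smul_mem_Xset hab huv c)
  · rintro (⟨a11, b11, a22, b22, a12, b12, -, h22, rfl⟩ | hY)
    · exact ⟨a22, b22, h22, _, _, _, (Phi_eq_add_smul ..).symm⟩
    · have h89 : (w 8, w 9) ≠ (0, 0) := hY.2.2.2.2.2.2.2.2
      exact ⟨w 8, w 9, h89, 0, 0, 1, by simpa using r_eq_of_mem_Yset w hY⟩
end

section
/- A nonzero vector p ∈ F^10 satisfies p136 = p145, p236 = p245 and the nine quadratic equations p135·p146 − p145² = 0, p235·p246 − p245² = 0, p146·p245 − p145·p246 = 0, p135·p246 − p235·p146 = 0, p135·p245 − p145·p235 = 0, p135·p456 − p145·p356 = 0, p145·p456 − p146·p356 = 0, p235·p456 − p245·p356 = 0, p245·p456 − p246·p356 = 0 if and only if p ∈ X ∪ Y. (That is, X ∪ Y is exactly the algebraic set cut out by these equations.) -/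
section

variable {F : Type*} [Field F]

lemma exists_eq_smul_of_mul_eq_mul {ι : Type*} {u v : ι → F} (hu : u ≠ 0)
    (huv : ∀ i j, u i * v j = u j * v i) : ∃ t : F, v = t • u := by
  obtain ⟨i, hi⟩ := Function.ne_iff.mp hu
  refine ⟨v i / u i, funext fun j => ?_⟩
  simp only [Pi.smul_apply, smul_eq_mul, Pi.zero_apply] at hi ⊢
  field_simp
  linear_combination huv i j

def veronese (a b : F) : Fin 3 → F := ![a ^ 2, a * b, b ^ 2]

lemma exists_eq_smul_veronese {w : Fin 3 → F} (hw : w 0 * w 2 = w 1 ^ 2) (h : w ≠ 0) :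
    ∃ c a b : F, c ≠ 0 ∧ (a, b) ≠ (0, 0) ∧ w = c • veronese a b := by
  by_cases h0 : w 0 = 0
  · have h1 : w 1 = 0 := pow_eq_zero_iff two_ne_zero |>.mp (by rw [← hw, h0, zero_mul])
    have h2 : w 2 ≠ 0 := fun h2 => h (funext fun i => by fin_cases i <;> assumption)
    refine ⟨w 2, 0, 1, h2, by simp, funext fun i => ?_⟩
    fin_cases i <;> simp [veronese, h0, h1]
  · refine ⟨(w 0)⁻¹, w 0, w 1, inv_ne_zero h0, by simp [h0], funext fun i => ?_⟩
    fin_cases i <;>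
      simp only [veronese, Pi.smul_apply, smul_eq_mul, Fin.isValue, Fin.zero_eta, Fin.mk_one,
        Fin.reduceFinMk, Matrix.cons_val_zero, Matrix.cons_val_one, Matrix.cons_val] <;>
      field_simp
    linear_combination hw

lemma exists_smul_veronese_of_minors {u v : Fin 3 → F} (hu : u 0 * u 2 = u 1 ^ 2)
    (hv : v 0 * v 2 = v 1 ^ 2) (huv : ∀ i j, u i * v j = u j * v i) (h : u ≠ 0 ∨ v ≠ 0) :
    ∃ s t a b : F, (s, t) ≠ (0, 0) ∧ (a, b) ≠ (0, 0) ∧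
      u = s • veronese a b ∧ v = t • veronese a b := by
  wlog hu0 : u ≠ 0 generalizing u v
  · obtain ⟨t, s, a, b, hts, hab, hv', hu'⟩ :=
      this hv hu (fun i j => by linear_combination huv j i) h.symm (h.resolve_left hu0)
    exact ⟨s, t, a, b, by simpa [and_comm] using hts, hab, hu', hv'⟩
  obtain ⟨c, a, b, hc, hab, rfl⟩ := exists_eq_smul_veronese hu hu0
  obtain ⟨t, rfl⟩ := exists_eq_smul_of_mul_eq_mul hu0 huv
  exact ⟨c, t * c, a, b, by simp [hc], hab, rfl, smul_smul _ _ _⟩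

lemma exists_mul_sub_mul_eq_s3 {a b : F} (hab : (a, b) ≠ (0, 0)) (l : F) :
    ∃ x y : F, x * b - y * a = l := by
  by_cases hb : b = 0
  · have ha : a ≠ 0 := by simpa [hb] using hab
    exact ⟨0, -l / a, by field_simp; ring⟩
  · exact ⟨l / b, 0, by field_simp; ring⟩

lemma mem_Xset_of_eq {p : Fin 10 → F} {s t a b l : F} (hst : (s, t) ≠ (0, 0))
    (hab : (a, b) ≠ (0, 0))
    (hp : p = ![s * a ^ 2, s * a * b, s * a * b, s * b ^ 2,
      t * a ^ 2, t * a * b, t * a * b, t * b ^ 2, l * a, l * b]) :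
    p ∈ Xset F := by
  obtain ⟨x, y, rfl⟩ := exists_mul_sub_mul_eq_s3 hab l
  refine ⟨-s, -t, a, b, x, y, by simpa using hst, hab, ?_⟩
  subst hp
  funext i
  fin_cases i <;>
    simp only [Phi, Fin.isValue, Fin.zero_eta, Fin.mk_one, Fin.reduceFinMk, Matrix.cons_val_zero,
      Matrix.cons_val_one, Matrix.cons_val] <;>
    ring

lemma mem_Yset_of_rows_eq_zero {p : Fin 10 → F} (hp : p ≠ 0) (hu : ![p 0, p 2, p 3] = 0)
    (hv : ![p 4, p 6, p 7] = 0) (h1 : p 1 = p 2) (h5 : p 5 = p 6) : p ∈ Yset F := by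
  obtain ⟨h0, h2, h3⟩ : p 0 = 0 ∧ p 2 = 0 ∧ p 3 = 0 :=
    ⟨congrFun hu 0, congrFun hu 1, congrFun hu 2⟩
  obtain ⟨h4, h6, h7⟩ : p 4 = 0 ∧ p 6 = 0 ∧ p 7 = 0 :=
    ⟨congrFun hv 0, congrFun hv 1, congrFun hv 2⟩
  refine ⟨h0, h1.trans h2, h2, h3, h4, h5.trans h6, h6, h7, fun h89 => hp ?_⟩
  simp only [Prod.mk.injEq] at h89
  funext i
  fin_cases i <;> simp [*]

lemma mem_Xset_of_rows_eq_smul_veronese {p : Fin 10 → F} {s t a b : F}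
    (hst : (s, t) ≠ (0, 0)) (hab : (a, b) ≠ (0, 0))
    (hu : ![p 0, p 2, p 3] = s • veronese a b) (hv : ![p 4, p 6, p 7] = t • veronese a b)
    (h1 : p 1 = p 2) (h5 : p 5 = p 6)
    (e6 : p 0 * p 9 - p 2 * p 8 = 0) (e7 : p 2 * p 9 - p 3 * p 8 = 0)
    (e8 : p 4 * p 9 - p 6 * p 8 = 0) (e9 : p 6 * p 9 - p 7 * p 8 = 0) : p ∈ Xset F := by
  have h0 : p 0 = s * a ^ 2 := congrFun hu 0
  have h2 : p 2 = s * (a * b) := congrFun hu 1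
  have h3 : p 3 = s * b ^ 2 := congrFun hu 2
  have h4 : p 4 = t * a ^ 2 := congrFun hv 0
  have h6 : p 6 = t * (a * b) := congrFun hv 1
  have h7 : p 7 = t * b ^ 2 := congrFun hv 2
  have hd : a * p 9 - b * p 8 = 0 := by
    have hst' : s ≠ 0 ∨ t ≠ 0 := by simpa [or_iff_not_and_not] using hst
    have hab' : a ≠ 0 ∨ b ≠ 0 := by simpa [or_iff_not_and_not] using hab
    have hprod : s * a * (a * p 9 - b * p 8) = 0 ∧ s * b * (a * p 9 - b * p 8) = 0 ∧
        t * a * (a * p 9 - b * p 8) = 0 ∧ t * b * (a * p 9 - b * p 8) = 0 := by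
      refine ⟨?_, ?_, ?_, ?_⟩
      · linear_combination e6 - p 9 * h0 + p 8 * h2
      · linear_combination e7 - p 9 * h2 + p 8 * h3
      · linear_combination e8 - p 9 * h4 + p 8 * h6
      · linear_combination e9 - p 9 * h6 + p 8 * h7
    simp only [mul_eq_zero] at hprod
    tauto
  obtain ⟨l, hl⟩ := exists_eq_smul_of_mul_eq_mul (u := ![a, b]) (v := ![p 8, p 9])
    (by simpa using hab) fun i j => by
      fin_cases i <;> fin_cases j <;>
        simp only [Fin.isValue, Fin.zero_eta, Fin.mk_one, Matrix.cons_val_zero,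
          Matrix.cons_val_one] <;>
        grind
  have h8 : p 8 = l * a := congrFun hl 0
  have h9 : p 9 = l * b := congrFun hl 1
  refine mem_Xset_of_eq (l := l) hst hab (funext fun i => ?_)
  fin_cases i <;>
    simp only [Fin.isValue, Fin.zero_eta, Fin.mk_one, Fin.reduceFinMk, Matrix.cons_val_zero,
      Matrix.cons_val_one, Matrix.cons_val] <;>
    grind

end

/-- A nonzero vector of `F^10` satisfies the linear identities `p136 = p145`,
`p236 = p245` and the nine quadratic equations if and only if it belongs to
`X ∪ Y`. -/
theorem statement3 {F : Type*} [Field F] (p : Fin 10 → F) (hp : p ≠ 0) :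
    (p 1 = p 2 ∧ p 5 = p 6 ∧
     p 0 * p 3 - p 2 ^ 2 = 0 ∧
     p 4 * p 7 - p 6 ^ 2 = 0 ∧
     p 3 * p 6 - p 2 * p 7 = 0 ∧
     p 0 * p 7 - p 4 * p 3 = 0 ∧
     p 0 * p 6 - p 2 * p 4 = 0 ∧
     p 0 * p 9 - p 2 * p 8 = 0 ∧
     p 2 * p 9 - p 3 * p 8 = 0 ∧
     p 4 * p 9 - p 6 * p 8 = 0 ∧
     p 6 * p 9 - p 7 * p 8 = 0) ↔
    p ∈ Xset F ∪ Yset F := by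
  refine ⟨fun ⟨h1, h5, e1, e2, e3, e4, e5, e6, e7, e8, e9⟩ => ?_, ?_⟩
  · by_cases hY : ![p 0, p 2, p 3] = 0 ∧ ![p 4, p 6, p 7] = 0
    · exact .inr (mem_Yset_of_rows_eq_zero hp hY.1 hY.2 h1 h5)
    obtain ⟨s, t, a, b, hst, hab, hu, hv⟩ := exists_smul_veronese_of_minors
      (u := ![p 0, p 2, p 3]) (v := ![p 4, p 6, p 7]) (by simpa [sub_eq_zero] using e1)
      (by simpa [sub_eq_zero] using e2) (fun i j => by
        fin_cases i <;> fin_cases j <;>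
          simp only [Fin.isValue, Fin.zero_eta, Fin.mk_one, Fin.reduceFinMk, Matrix.cons_val_zero,
            Matrix.cons_val_one, Matrix.cons_val] <;>
          grind)
      (not_and_or.mp hY)
    exact .inl (mem_Xset_of_rows_eq_smul_veronese hst hab hu hv h1 h5 e6 e7 e8 e9)
  · rintro (⟨a11, b11, a22, b22, a12, b12, -, -, rfl⟩ |
      ⟨h0, h1, h2, h3, h4, h5, h6, h7, -⟩)
    · refine ⟨rfl, rfl, ?_, ?_, ?_, ?_, ?_, ?_, ?_, ?_, ?_⟩ <;>
        simp only [Phi, Fin.isValue, Matrix.cons_val_zero, Matrix.cons_val] <;> ring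
    · simp [*]
end

section
/- For every (a11,b11,a22,b22,a12,b12) ∈ F^6 with (a11,b11) ≠ (0,0) and (a22,b22) ≠ (0,0), the 10×6 Jacobian matrix of Φ at this point — the matrix whose rows are the formal partial derivatives of the ten coordinate polynomials of Φ with respect to the six parameters a11, b11, a22, b22, a12, b12 (for instance, the row corresponding to p135 = −a11·a22² is (−a22², 0, −2·a11·a22, 0, 0, 0)), evaluated at the given point — has rank exactly 4, regardless of the characteristic of F. -/
/-!
`Φ` is invariant under the two one-parameter groups
`(a12, b12) ↦ (a12 + s a22, b12 + s b22)` and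
`(a11, b11, a22, b22, a12, b12) ↦ (t² a11, t² b11, t⁻¹ a22, t⁻¹ b22, t² a12, t² b12)`,
so their infinitesimal generators are two kernel vectors of the Jacobian, independent as soon as
`(a22, b22) ≠ 0`; hence the rank is at most `4`. Conversely, according to which of `a11, b11` and
which of `a22, b22` is nonzero, one of four `4 × 4` submatrices is lower triangular with nonzero
diagonal, so the rank is at least `4`. All minors used are monomials in the coordinates, so the
argument is independent of the characteristic.
-/

open MvPolynomial

/-- The ten coordinate polynomials (indexed in the order
`p135, p136, p145, p146, p235, p236, p245, p246, p356, p456`) of the polynomial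
map `Φ : F^6 → F^10`, as polynomials in the six variables
`a11, b11, a22, b22, a12, b12` (variables `0,…,5` in this order). -/
noncomputable def PhiPoly (F : Type*) [Field F] : Fin 10 → MvPolynomial (Fin 6) F :=
  ![-(X 0 * X 2 ^ 2), -(X 0 * X 2 * X 3), -(X 0 * X 2 * X 3), -(X 0 * X 3 ^ 2),
    -(X 1 * X 2 ^ 2), -(X 1 * X 2 * X 3), -(X 1 * X 2 * X 3), -(X 1 * X 3 ^ 2),
    X 2 * (X 4 * X 3 - X 5 * X 2), X 3 * (X 4 * X 3 - X 5 * X 2)]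

/-- The `10 × 6` Jacobian matrix of `Φ` at a point of `F^6`: its rows are the
formal partial derivatives of the ten coordinate polynomials with respect to the
six parameters `a11, b11, a22, b22, a12, b12`, evaluated at the point. -/
noncomputable def PhiJacobian {F : Type*} [Field F] (a11 b11 a22 b22 a12 b12 : F) :
    Matrix (Fin 10) (Fin 6) F :=
  Matrix.of fun i j =>
    MvPolynomial.eval ![a11, b11, a22, b22, a12, b12] (MvPolynomial.pderiv j (PhiPoly F i))

theorem Matrix.card_le_rank_of_submatrix_lowerTriangular {m n k R : Type*} [Fintype n]
    [Fintype k] [LinearOrder k] [CommRing R] [IsDomain R] (A : Matrix m n R) (r : k → m)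
    (c : k → n) (hA : ∀ i j, i < j → A (r i) (c j) = 0) (hd : ∀ i, A (r i) (c i) ≠ 0) :
    Fintype.card k ≤ A.rank := by
  classical
  have hdet : (A.submatrix r c).det ≠ 0 := by
    rw [det_of_isLowerTriangular (A.submatrix r c) fun i j h => hA i j h]
    exact Finset.prod_ne_zero_iff.mpr fun i _ => hd i
  exact (rank_of_det_ne_zero hdet).symm.trans_le (A.rank_submatrix_le r c)

theorem Prod.ne_zero_or_ne_zero_of_ne {M N : Type*} [Zero M] [Zero N] {a : M} {b : N}
    (h : (a, b) ≠ (0, 0)) : a ≠ 0 ∨ b ≠ 0 := by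
  simpa only [ne_eq, Prod.mk.injEq, not_and_or] using h

section PhiJacobian

variable {F : Type*} [Field F] (a11 b11 a22 b22 a12 b12 : F)

theorem phiJacobian_eq : PhiJacobian a11 b11 a22 b22 a12 b12 =
    !![-a22 ^ 2, 0, -(2 * a11 * a22), 0, 0, 0;
       -(a22 * b22), 0, -(a11 * b22), -(a11 * a22), 0, 0;
       -(a22 * b22), 0, -(a11 * b22), -(a11 * a22), 0, 0;
       -b22 ^ 2, 0, 0, -(2 * a11 * b22), 0, 0;
       0, -a22 ^ 2, -(2 * b11 * a22), 0, 0, 0;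
       0, -(a22 * b22), -(b11 * b22), -(b11 * a22), 0, 0;
       0, -(a22 * b22), -(b11 * b22), -(b11 * a22), 0, 0;
       0, -b22 ^ 2, 0, -(2 * b11 * b22), 0, 0;
       0, 0, a12 * b22 - 2 * b12 * a22, a12 * a22, a22 * b22, -a22 ^ 2;
       0, 0, -(b12 * b22), 2 * a12 * b22 - b12 * a22, b22 ^ 2, -(a22 * b22)] := by
  ext i j
  fin_cases i <;> fin_cases j <;> simp [PhiJacobian, PhiPoly, pderiv_X] <;> ring

def phiNullVectors : Matrix (Fin 6) (Fin 2) F :=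
  !![0, 2 * a11; 0, 2 * b11; 0, -a22; 0, -b22; a22, 2 * a12; b22, 2 * b12]

theorem phiJacobian_mul_phiNullVectors :
    PhiJacobian a11 b11 a22 b22 a12 b12 * phiNullVectors a11 b11 a22 b22 a12 b12 = 0 := by
  rw [phiJacobian_eq]
  ext i j
  fin_cases i <;> fin_cases j <;> simp [phiNullVectors, Matrix.mul_apply, Fin.sum_univ_succ] <;>
    ring

variable {a22 b22}

theorem two_le_rank_phiNullVectors (h : (a22, b22) ≠ (0, 0)) :
    2 ≤ (phiNullVectors a11 b11 a22 b22 a12 b12).rank := by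
  obtain ha | hb := Prod.ne_zero_or_ne_zero_of_ne h
  · refine Matrix.card_le_rank_of_submatrix_lowerTriangular _ ![2, 4] ![1, 0] ?_ ?_
    · intro i j hij; fin_cases i <;> fin_cases j <;> simp_all [phiNullVectors]
    · intro i; fin_cases i <;> simpa [phiNullVectors] using ha
  · refine Matrix.card_le_rank_of_submatrix_lowerTriangular _ ![3, 5] ![1, 0] ?_ ?_
    · intro i j hij; fin_cases i <;> fin_cases j <;> simp_all [phiNullVectors]
    · intro i; fin_cases i <;> simpa [phiNullVectors] using hb

theorem rank_phiJacobian_le (h : (a22, b22) ≠ (0, 0)) :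
    (PhiJacobian a11 b11 a22 b22 a12 b12).rank ≤ 4 := by
  have := Matrix.rank_add_rank_le_card_of_mul_eq_zero
    (phiJacobian_mul_phiNullVectors a11 b11 a22 b22 a12 b12)
  have := two_le_rank_phiNullVectors a11 b11 a12 b12 h
  simp only [Fintype.card_fin] at *
  omega

variable {a11 b11}

theorem four_le_rank_phiJacobian (h1 : (a11, b11) ≠ (0, 0)) (h2 : (a22, b22) ≠ (0, 0)) :
    4 ≤ (PhiJacobian a11 b11 a22 b22 a12 b12).rank := by
  rw [phiJacobian_eq]
  -- rows `p135, p235, p136 | p236, p356` if `a22 ≠ 0`, `p146, p246, p145 | p245, p456` if `b22 ≠ 0`,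
  -- the third one chosen by whether `a11 ≠ 0` or `b11 ≠ 0`
  rcases Prod.ne_zero_or_ne_zero_of_ne h1 with ha | hb <;>
    rcases Prod.ne_zero_or_ne_zero_of_ne h2 with hc | hd
  on_goal 1 =>
    refine Matrix.card_le_rank_of_submatrix_lowerTriangular _ ![0, 4, 1, 8] ![0, 1, 3, 5] ?_ ?_
  on_goal 3 =>
    refine Matrix.card_le_rank_of_submatrix_lowerTriangular _ ![3, 7, 2, 9] ![0, 1, 2, 4] ?_ ?_
  on_goal 5 =>
    refine Matrix.card_le_rank_of_submatrix_lowerTriangular _ ![0, 4, 5, 8] ![0, 1, 3, 5] ?_ ?_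
  on_goal 7 =>
    refine Matrix.card_le_rank_of_submatrix_lowerTriangular _ ![3, 7, 6, 9] ![0, 1, 2, 4] ?_ ?_
  all_goals intro i
  all_goals first
    | intro j hij; fin_cases i <;> fin_cases j <;> simp_all
    | fin_cases i <;> simp [*]

end PhiJacobian

/-- At every parameter point with `(a11,b11) ≠ (0,0)` and `(a22,b22) ≠ (0,0)`
the Jacobian matrix of `Φ` has rank exactly `4`, regardless of the
characteristic of `F`. -/
theorem statement4 {F : Type*} [Field F] (a11 b11 a22 b22 a12 b12 : F)
    (h1 : (a11, b11) ≠ (0, 0)) (h2 : (a22, b22) ≠ (0, 0)) :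
    (PhiJacobian a11 b11 a22 b22 a12 b12).rank = 4 :=
  le_antisymm (rank_phiJacobian_le a11 b11 a12 b12 h2) (four_le_rank_phiJacobian a12 b12 h1 h2)
end

section
/- Let g1 = [[0,0],[0,1]] and g2 = [[0,1],[0,0]] (2×2 matrices over F, both elements of T). Then the left T-submodule of T² generated by the pair (g1, g2), i.e., the set {(t·g1, t·g2) : t ∈ T}, equals the set of all pairs ([[0,y],[0,z]], [[0,x],[0,0]]) with x, y, z ∈ F. -/
def Ternions (F : Type*) [Field F] : Subring (Matrix (Fin 2) (Fin 2) F) where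
  carrier := {M | M 1 0 = 0}
  zero_mem' := by simp
  one_mem' := by simp [Matrix.one_apply]
  add_mem' := by
    intro a b ha hb
    simp only [Set.mem_setOf_eq] at *
    simp [Matrix.add_apply, ha, hb]
  neg_mem' := by
    intro a ha
    simp only [Set.mem_setOf_eq] at *
    simp [Matrix.neg_apply, ha]
  mul_mem' := by
    intro a b ha hb
    simp only [Set.mem_setOf_eq] at *
    simp [Matrix.mul_apply, Fin.sum_univ_two, ha, hb]

namespace Matrix

variable {R : Type*} [NonAssocSemiring R] (M : Matrix (Fin 2) (Fin 2) R)

theorem mul_fin_two_e22 : M * !![0, 0; 0, 1] = !![0, M 0 1; 0, M 1 1] := by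
  rw [eta_fin_two M, mul_fin_two]
  simp

theorem mul_fin_two_e12 : M * !![0, 1; 0, 0] = !![0, M 0 0; 0, M 1 0] := by
  rw [eta_fin_two M, mul_fin_two]
  simp

end Matrix

/-- The cyclic left `T`-submodule of `T²` generated by the pair
`(g1, g2) = ([[0,0],[0,1]], [[0,1],[0,0]])`, i.e. the set `{(t·g1, t·g2) : t ∈ T}`,
is exactly the set of all pairs `([[0,y],[0,z]], [[0,x],[0,0]])` with
`x, y, z ∈ F`. -/
theorem statement12 {F : Type*} [Field F] :
    {p : Matrix (Fin 2) (Fin 2) F × Matrix (Fin 2) (Fin 2) F |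
      ∃ t : Ternions F,
        p = ((t : Matrix (Fin 2) (Fin 2) F) * !![0, 0; 0, 1],
             (t : Matrix (Fin 2) (Fin 2) F) * !![0, 1; 0, 0])} =
    {p | ∃ x y z : F, p = (!![0, y; 0, z], !![0, x; 0, 0])} := by
  ext p
  constructor
  · rintro ⟨t, rfl⟩
    have ht : t.1 1 0 = 0 := t.2
    refine ⟨t.1 0 0, t.1 0 1, t.1 1 1, ?_⟩
    rw [Matrix.mul_fin_two_e22, Matrix.mul_fin_two_e12, ht]
  · rintro ⟨x, y, z, rfl⟩
    have hM : !![x, y; 0, z] ∈ Ternions F := rfl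
    refine ⟨⟨_, hM⟩, ?_⟩
    rw [Matrix.mul_fin_two_e22, Matrix.mul_fin_two_e12]
    rfl
end

section
/- For (u,v), (u',v') ∈ F² ∖ {(0,0)}, the planes γ(u,v) = span{q1(u,v), q2(u,v), r(u,v)} and γ(u',v') = span{q1(u',v'), q2(u',v'), r(u',v')} in F^10 are equal if and only if (u',v') = λ·(u,v) for some λ ∈ F ∖ {0}. Hence the assignment of the plane γ(u,v) to the parameter point (u : v) of the projective line over F is well defined and injective. -/
/-!
Rescaling `(u, v)` by `λ ≠ 0` rescales `q1, q2` by `λ²` and `r` by `λ`, so the plane only depends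
on `(u : v)`. Conversely, the last two coordinates `(p356, p456)` vanish on `q1` and `q2`, so they
send the plane `γ(u, v)` onto the line `F ∙ (u, v)`; equal planes therefore give proportional
parameter pairs.
-/

theorem Submodule.span_triple_smul_eq {R M : Type*} [Semiring R] [AddCommMonoid M] [Module R M]
    {a b c : R} (ha : IsUnit a) (hb : IsUnit b) (hc : IsUnit c) (x y z : M) :
    span R {a • x, b • y, c • z} = span R {x, y, z} := by
  simp only [span_insert, span_singleton_smul_eq ha, span_singleton_smul_eq hb,
    span_singleton_smul_eq hc]

section Plane

variable {F : Type*} [Field F]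

lemma q1_mul_mul (lam u v : F) : q1 (lam * u) (lam * v) = lam ^ 2 • q1 u v := by
  ext i; fin_cases i <;> simp [q1] <;> ring

lemma q2_mul_mul (lam u v : F) : q2 (lam * u) (lam * v) = lam ^ 2 • q2 u v := by
  ext i; fin_cases i <;> simp [q2] <;> ring

lemma r_mul_mul (lam u v : F) : r (lam * u) (lam * v) = lam • r u v := by
  ext i; fin_cases i <;> simp [r]

lemma span_q1_q2_r_mul_mul {lam : F} (hlam : lam ≠ 0) (u v : F) :
    Submodule.span F {q1 (lam * u) (lam * v), q2 (lam * u) (lam * v), r (lam * u) (lam * v)} =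
      Submodule.span F {q1 u v, q2 u v, r u v} := by
  have hlam2 : IsUnit (lam ^ 2) := (pow_ne_zero 2 hlam).isUnit
  rw [q1_mul_mul, q2_mul_mul, r_mul_mul,
    Submodule.span_triple_smul_eq hlam2 hlam2 hlam.isUnit]

def lastTwoCoords : (Fin 10 → F) →ₗ[F] F × F :=
  (LinearMap.proj 8).prod (LinearMap.proj 9)

lemma lastTwoCoords_q1 (u v : F) : lastTwoCoords (q1 u v) = 0 := by
  simp [lastTwoCoords, q1]

lemma lastTwoCoords_q2 (u v : F) : lastTwoCoords (q2 u v) = 0 := by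
  simp [lastTwoCoords, q2]

lemma lastTwoCoords_r (u v : F) : lastTwoCoords (r u v) = (u, v) := by
  simp [lastTwoCoords, r]

lemma map_lastTwoCoords_span_q1_q2_r (u v : F) :
    (Submodule.span F {q1 u v, q2 u v, r u v}).map lastTwoCoords = F ∙ (u, v) := by
  simp only [Submodule.map_span, Set.image_insert_eq, Set.image_singleton, lastTwoCoords_q1,
    lastTwoCoords_q2, lastTwoCoords_r, Submodule.span_insert_zero]

end Plane

theorem statement15_general {F : Type*} [Field F] (u v u' v' : F)
    (h' : (u', v') ≠ (0, 0)) :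
    Submodule.span F ({q1 u v, q2 u v, r u v} : Set (Fin 10 → F)) =
      Submodule.span F ({q1 u' v', q2 u' v', r u' v'} : Set (Fin 10 → F)) ↔
    ∃ lam : F, lam ≠ 0 ∧ (u', v') = (lam * u, lam * v) := by
  constructor
  · intro hspan
    have hmem : (u', v') ∈ F ∙ (u, v) := by
      rw [← map_lastTwoCoords_span_q1_q2_r, hspan, ← lastTwoCoords_r]
      exact Submodule.mem_map_of_mem (Submodule.subset_span (by simp))
    obtain ⟨lam, hlam⟩ := Submodule.mem_span_singleton.1 hmem
    refine ⟨lam, ?_, hlam.symm⟩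
    rintro rfl
    exact h' (by simpa using hlam.symm)
  · rintro ⟨lam, hlam, heq⟩
    obtain ⟨rfl, rfl⟩ := Prod.mk.inj heq
    exact (span_q1_q2_r_mul_mul hlam u v).symm

/-- Two planes `γ(u,v)` and `γ(u',v')` coincide if and only if the parameter
pairs are proportional; hence `(u : v) ↦ γ(u,v)` is a well-defined injective map
on the projective line over `F`. -/
theorem statement15 {F : Type*} [Field F] (u v u' v' : F)
    (h : (u, v) ≠ (0, 0)) (h' : (u', v') ≠ (0, 0)) :
    Submodule.span F ({q1 u v, q2 u v, r u v} : Set (Fin 10 → F)) =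
      Submodule.span F ({q1 u' v', q2 u' v', r u' v'} : Set (Fin 10 → F)) ↔
    ∃ lam : F, lam ≠ 0 ∧ (u', v') = (lam * u, lam * v) :=
  statement15_general u v u' v' h'
end
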